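/- arXiv:2508.12135 — 2 statements merged into one kernel-verified Lean document; each statement's English description precedes it below -/
import Mathlib

section
/- Let E_n be the n×n skew-symmetric matrix with (i,j)-entry 1 if i < j, −1 if i > j, and 0 if i = j, and let U_n be the upper triangular matrix with 1's on the diagonal and 2's above. Then U_n = E_n + J_n where J_n is the all-ones matrix, and consequently for any m×n matrix Z with m even, det[Z U_n Zᵀ] = det[Z E_n Zᵀ]. -/
open Matrix

/-- The `n × n` skew-symmetric matrix with `(i,j)` entry `sign (j - i)`. -/
def En (R : Type*) [CommRing R] (n : ℕ) : Matrix (Fin n) (Fin n) R :=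
  Matrix.of fun i j => if i < j then 1 else if j < i then -1 else 0

/-- The `n × n` upper triangular matrix with `1`'s on the diagonal and `2`'s above. -/
def Un (R : Type*) [CommRing R] (n : ℕ) : Matrix (Fin n) (Fin n) R :=
  Matrix.of fun i j => if i < j then 2 else if i = j then 1 else 0

/-!
Write `Eₙ = T - Tᵀ` with `T` the strictly upper triangular matrix of ones, and `Jₙ = 𝟙 𝟙ᵀ`.
Then `Z Uₙ Zᵀ = S + w wᵀ` with `S = B - Bᵀ`, `B = Z T Zᵀ` and `w = Z 𝟙`; the matrices `B - Bᵀ`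
are exactly the alternating ones (skew with zero diagonal). Bordering `S` by `w`, a Schur
complement and linearity in the corner entry give `det (S + w wᵀ) = det S + det M₀`, where `M₀` is
alternating of odd order. Such a determinant vanishes: where `2` is not a zero divisor because
`det M₀ = det M₀ᵀ = -det M₀`, and over any commutative ring by specialising the generic
alternating matrix `X - Xᵀ` over `ℤ[xᵢⱼ]`.
-/

namespace Matrix

variable {ι R : Type*} [Fintype ι] [DecidableEq ι] [CommRing R]

theorem det_eq_zero_of_transpose_eq_neg [IsAddTorsionFree R] {A : Matrix ι ι R}
    (hA : Aᵀ = -A) (hι : Odd (Fintype.card ι)) : A.det = 0 := by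
  have h : A.det + A.det = 0 := by
    nth_rewrite 1 [← det_transpose]
    rw [hA, det_neg, hι.neg_one_pow, neg_one_mul, neg_add_cancel]
  refine IsAddTorsionFree.nsmul_right_injective two_ne_zero ?_
  simpa only [two_nsmul, smul_zero] using h

theorem det_sub_transpose_eq_zero (B : Matrix ι ι R) (hι : Odd (Fintype.card ι)) :
    (B - Bᵀ).det = 0 := by
  let X := mvPolynomialX ι ι ℤ
  have hX : (X - Xᵀ).det = 0 :=
    det_eq_zero_of_transpose_eq_neg (by rw [transpose_sub, transpose_transpose, neg_sub]) hι
  let φ := MvPolynomial.eval₂Hom (Int.castRingHom R) fun p : ι × ι => B p.1 p.2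
  have hφ : φ.mapMatrix X = B := mvPolynomialX_map_eval₂ _ B
  rw [← hφ, RingHom.mapMatrix_apply, ← transpose_map, ← RingHom.mapMatrix_apply,
    ← RingHom.mapMatrix_apply, ← map_sub, ← RingHom.map_det, hX, map_zero]

theorem det_sub_transpose_add_vecMulVec_self (B : Matrix ι ι R) (v : ι → R)
    (hι : Even (Fintype.card ι)) : (B - Bᵀ + vecMulVec v v).det = (B - Bᵀ).det := by
  set S := B - Bᵀ
  let j : Unit ⊕ ι := .inl ()
  let M₀ := fromBlocks 0 (-replicateRow Unit v) (replicateCol Unit v) S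
  have hM₀ : M₀.det = 0 := by
    have : M₀ = fromBlocks 0 0 (replicateCol Unit v) B -
        (fromBlocks 0 0 (replicateCol Unit v) B)ᵀ := by
      rw [fromBlocks_transpose, sub_eq_add_neg, fromBlocks_neg, fromBlocks_add]
      simp [M₀, S, sub_eq_add_neg]
    rw [this]
    exact det_sub_transpose_eq_zero _ (by simpa [Fintype.card_sum, add_comm] using hι.add_one)
  have hM : (B - Bᵀ + vecMulVec v v).det = (updateRow M₀ j (M₀ j + Pi.single j 1)).det := by
    have : updateRow M₀ j (M₀ j + Pi.single j 1) =
        fromBlocks 1 (-replicateRow Unit v) (replicateCol Unit v) S := by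
      ext (i | i) (k | k) <;> simp [M₀, j, updateRow_apply]
    rw [this, det_fromBlocks_one₁₁, Matrix.mul_neg, sub_neg_eq_add, ← vecMulVec_eq]
  have hN : (updateRow M₀ j (Pi.single j 1)).det = S.det := by
    have : updateRow M₀ j (Pi.single j 1) = fromBlocks 1 0 (replicateCol Unit v) S := by
      ext (i | i) (k | k) <;> simp [M₀, j, updateRow_apply]
    rw [this, det_fromBlocks_zero₁₂, det_one, one_mul]
  rw [hM, det_updateRow_add, updateRow_eq_self, hM₀, hN, zero_add]

theorem mul_ones_mul_transpose {m n S : Type*} [Fintype n] [CommSemiring S] (Z : Matrix m n S) :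
    Z * (of fun _ _ => 1 : Matrix n n S) * Zᵀ = vecMulVec (Z *ᵥ 1) (Z *ᵥ 1) := by
  have : (of fun _ _ => 1 : Matrix n n S) = vecMulVec 1 1 := by
    ext; simp [vecMulVec_apply]
  rw [this, mul_vecMulVec, vecMulVec_mul, vecMul_transpose]

end Matrix

def strictUpperOnes (R : Type*) [Zero R] [One R] (n : ℕ) : Matrix (Fin n) (Fin n) R :=
  Matrix.of fun i j => if i < j then 1 else 0

theorem En_eq_strictUpperOnes_sub_transpose (R : Type*) [CommRing R] (n : ℕ) :
    En R n = strictUpperOnes R n - (strictUpperOnes R n)ᵀ := by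
  ext i j
  simp only [En, strictUpperOnes, Matrix.sub_apply, transpose_apply, of_apply]
  split_ifs <;> first | omega | simp

theorem Un_eq_En_add_ones (R : Type*) [CommRing R] (n : ℕ) :
    Un R n = En R n + Matrix.of (fun _ _ => (1 : R)) := by
  ext i j
  simp only [Un, En, Matrix.add_apply, of_apply]
  split_ifs <;> first | omega | norm_num

/-- `Uₙ = Eₙ + Jₙ` where `Jₙ` is the all-ones matrix, and consequently, for any matrix
`Z` with an even number `m = 2l` of rows and `n` columns,
`det (Z Uₙ Zᵀ) = det (Z Eₙ Zᵀ)`. -/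
theorem Un_eq_En_add_ones_and_det {R : Type*} [CommRing R] (n : ℕ) :
    (Un R n = En R n + Matrix.of (fun _ _ => (1 : R))) ∧
    ∀ (l : ℕ) (Z : Matrix (Fin (2 * l)) (Fin n) R),
      Matrix.det (Z * Un R n * Zᵀ) = Matrix.det (Z * En R n * Zᵀ) := by
  refine ⟨Un_eq_En_add_ones R n, fun l Z => ?_⟩
  set B := Z * strictUpperOnes R n * Zᵀ
  have hE : Z * En R n * Zᵀ = B - Bᵀ := by
    rw [En_eq_strictUpperOnes_sub_transpose, Matrix.mul_sub, Matrix.sub_mul]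
    simp [B, Matrix.mul_assoc]
  rw [Un_eq_En_add_ones, Matrix.mul_add, Matrix.add_mul, hE, mul_ones_mul_transpose]
  exact det_sub_transpose_add_vecMulVec_self B _ (by simp)
end

section
/- Lindström–Gessel–Viennot: Let G be a locally finite acyclic weighted directed graph and u_1,...,u_m, v_1,...,v_m vertices. Then Σ_{σ ∈ S_m} sgn(σ)·GF[P_0(u_σ, v)] = det[GF[P(u_i, v_j)]]_{1≤i,j≤m}, where GF[P(u,v)] is the sum of weights of directed paths from u to v and GF[P_0(u_σ, v)] is the weighted count of m-tuples of pairwise vertex-disjoint paths with path k going from u_{σ(k)} to v_k. -/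
/-!
Expanding the determinant, the term of `σ` is the signed sum over all families of paths in which
path `k` runs from `u (σ k)` to `v k`. The intersecting families cancel in pairs: let `i` be the
first path through a vertex visited twice, `x` the last such vertex on it and `j` the first other
path through `x`, and swap the initial segments of paths `i` and `j` up to `x`. This preserves the
weight and the multiset of visited vertices, hence also the choice of `(i, x, j)`, and it replaces
`σ` by `σ * swap i j`, which flips the sign. What remains are the nonintersecting families.
-/

open Finset

/-- The weight of a path, given as a list of visited vertices: the product of the
weights of its consecutive edges. -/
def pathWeight {V : Type*} {R : Type*} [CommRing R] (w : V → V → R) : List V → R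
  | [] => 1
  | [_] => 1
  | a :: b :: t => w a b * pathWeight w (b :: t)

/-- The generating function of all directed paths from `u` to `v`:
the sum of the weights of all vertex lists starting at `u` and ending at `v`. -/
noncomputable def pathGF {V : Type*} {R : Type*} [CommRing R] (w : V → V → R) (u v : V) : R :=
  ∑ᶠ l ∈ {l : List V | l.head? = some u ∧ l.getLast? = some v}, pathWeight w l

theorem sum_sign_mul_sum_eq_zero_of_involution {ι α R : Type*} [Fintype ι] [DecidableEq ι]
    [CommRing R] (S : Equiv.Perm ι → Finset α) (f : α → R) (τ : α → Equiv.Perm ι)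
    (φ : α → α) (hτ : ∀ σ, ∀ a ∈ S σ, (τ a).IsSwap)
    (hmem : ∀ σ, ∀ a ∈ S σ, φ a ∈ S (σ * τ a)) (hτφ : ∀ σ, ∀ a ∈ S σ, τ (φ a) = τ a)
    (hφφ : ∀ σ, ∀ a ∈ S σ, φ (φ a) = a) (hf : ∀ σ, ∀ a ∈ S σ, f (φ a) = f a) :
    ∑ σ, ((Equiv.Perm.sign σ : ℤ) : R) * ∑ a ∈ S σ, f a = 0 := by
  simp_rw [mul_sum]
  rw [sum_sigma']
  refine sum_involution (fun p _ => ⟨p.1 * τ p.2, φ p.2⟩) ?_ ?_ ?_ ?_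
  · rintro ⟨σ, a⟩ h
    rw [mem_sigma] at h
    simp only [Equiv.Perm.sign_mul, (hτ σ a h.2).sign_eq, hf σ a h.2]
    push_cast
    ring
  · rintro ⟨σ, a⟩ h _ heq
    rw [mem_sigma] at h
    have : τ a = 1 := mul_eq_left.mp (congrArg Sigma.fst heq)
    simpa [this] using (hτ σ a h.2).sign_eq
  · rintro ⟨σ, a⟩ h
    rw [mem_sigma] at h ⊢
    exact ⟨mem_univ _, hmem σ a h.2⟩
  · rintro ⟨σ, a⟩ h
    rw [mem_sigma] at h
    obtain ⟨x, y, -, hxy⟩ := hτ σ a h.2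
    simp only [hτφ σ a h.2, hφφ σ a h.2, mul_assoc, hxy, Equiv.swap_mul_self, mul_one]

namespace List

theorem find?_reverse_eq_some_iff {α : Type*} {p : α → Bool} {l : List α} {x : α} :
    l.reverse.find? p = some x ↔ p x ∧ ∃ A B, l = A ++ x :: B ∧ ∀ y ∈ B, p y = false := by
  rw [find?_eq_some_iff_append]
  constructor
  · rintro ⟨hx, A, B, h, hA⟩
    exact ⟨hx, B.reverse, A.reverse, by simpa using congrArg reverse h, by simpa using hA⟩
  · rintro ⟨hx, A, B, rfl, hB⟩
    exact ⟨hx, B.reverse, A.reverse, by simp, by simpa using hB⟩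

variable {α : Type*} [DecidableEq α] {x : α}

def graft (x : α) (l l' : List α) : List α :=
  l'.takeWhile (· ≠ x) ++ l.dropWhile (· ≠ x)

theorem graft_self (l : List α) : graft x l l = l :=
  takeWhile_append_dropWhile

theorem takeWhile_ne_append_cons {A : List α} (hA : x ∉ A) (B : List α) :
    (A ++ x :: B).takeWhile (· ≠ x) = A := by
  rw [takeWhile_append_of_pos (by grind)]
  simp

theorem dropWhile_ne_append_cons {A : List α} (hA : x ∉ A) (B : List α) :
    (A ++ x :: B).dropWhile (· ≠ x) = x :: B := by
  rw [dropWhile_append_of_pos (by grind)]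
  simp

theorem graft_append_cons {A D : List α} (hA : x ∉ A) (hD : x ∉ D) (B C : List α) :
    graft x (A ++ x :: B) (D ++ x :: C) = D ++ x :: B := by
  rw [graft, takeWhile_ne_append_cons hD, dropWhile_ne_append_cons hA]

theorem coe_graft (l l' : List α) :
    (graft x l l' : Multiset α) = ↑(l'.takeWhile (· ≠ x)) + ↑(l.dropWhile (· ≠ x)) :=
  (Multiset.coe_add _ _).symm

theorem mem_graft_self {l : List α} (hx : x ∈ l) (l' : List α) : x ∈ graft x l l' := by
  obtain ⟨A, B, rfl, hA⟩ := eq_append_cons_of_mem hx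
  rw [graft, dropWhile_ne_append_cons hA]
  simp

theorem graft_graft {l l' : List α} (hx : x ∈ l) (hx' : x ∈ l') :
    graft x (graft x l l') (graft x l' l) = l := by
  obtain ⟨A, B, rfl, hA⟩ := eq_append_cons_of_mem hx
  obtain ⟨D, C, rfl, hD⟩ := eq_append_cons_of_mem hx'
  rw [graft_append_cons hA hD, graft_append_cons hD hA, graft_append_cons hD hA]

end List

namespace LGV

section Exchange

def NonIntersecting {V ι : Type*} (P : ι → List V) : Prop :=
  ∀ i j, i ≠ j → ∀ x ∈ P i, x ∉ P j

variable {V ι : Type*} [DecidableEq V] [DecidableEq ι]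

def exchange (P : ι → List V) (i j : ι) (x : V) : ι → List V :=
  fun k => (P k).graft x (P (Equiv.swap i j k))

variable {P : ι → List V} {i j k : ι} {x : V}

theorem exchange_of_ne (hi : k ≠ i) (hj : k ≠ j) : exchange P i j x k = P k := by
  rw [exchange, Equiv.swap_apply_of_ne_of_ne hi hj, List.graft_self]

theorem exchange_left : exchange P i j x i = (P i).graft x (P j) := by
  rw [exchange, Equiv.swap_apply_left]

theorem exchange_right : exchange P i j x j = (P j).graft x (P i) := by
  rw [exchange, Equiv.swap_apply_right]

theorem exchange_exchange (hi : x ∈ P i) (hj : x ∈ P j) :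
    exchange (exchange P i j x) i j x = P := by
  funext k
  by_cases hki : k = i
  · subst hki
    rw [exchange_left, exchange_left, exchange_right, List.graft_graft hi hj]
  by_cases hkj : k = j
  · subst hkj
    rw [exchange_right, exchange_left, exchange_right, List.graft_graft hj hi]
  rw [exchange_of_ne hki hkj, exchange_of_ne hki hkj]

variable [Fintype ι]

instance : DecidablePred (NonIntersecting : (ι → List V) → Prop) := fun P => by
  unfold NonIntersecting; infer_instance

theorem sum_coe_exchange (P : ι → List V) (i j : ι) (x : V) :
    ∑ k, (exchange P i j x k : Multiset V) = ∑ k, (P k : Multiset V) := by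
  simp only [exchange, List.coe_graft, Finset.sum_add_distrib]
  rw [Equiv.sum_comp (Equiv.swap i j) fun k => ((P k).takeWhile (· ≠ x) : Multiset V),
    ← Finset.sum_add_distrib]
  simp only [Multiset.coe_add, List.takeWhile_append_dropWhile]

theorem prod_exchange {M : Type*} [CommMonoid M] (f : List V → M)
    (hf : f ((P i).graft x (P j)) * f ((P j).graft x (P i)) = f (P i) * f (P j)) :
    ∏ k, f (exchange P i j x k) = ∏ k, f (P k) := by
  rcases eq_or_ne i j with rfl | hij
  · simp [exchange, List.graft_self]
  rw [← prod_mul_prod_compl {i, j}, ← prod_mul_prod_compl {i, j} fun k => f (P k),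
    prod_pair hij, prod_pair hij, exchange_left, exchange_right, hf]
  refine congrArg _ (Finset.prod_congr rfl fun k hk => ?_)
  simp only [Finset.mem_compl, Finset.mem_insert, Finset.mem_singleton, not_or] at hk
  rw [exchange_of_ne hk.1 hk.2]

/-- Visited at least twice, counted with multiplicity: unlike "lies on two of the paths", this is
invariant under `exchange`. -/
def IsCrossing (P : ι → List V) (y : V) : Prop :=
  2 ≤ (∑ k, (P k : Multiset V)).count y

instance (P : ι → List V) : DecidablePred (IsCrossing P) := fun y => by
  unfold IsCrossing; infer_instance

theorem isCrossing_exchange : IsCrossing (exchange P i j x) = IsCrossing P := by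
  funext y
  rw [IsCrossing, IsCrossing, sum_coe_exchange]

theorem isCrossing_of_mem_of_mem {a b : ι} {y : V} (hab : a ≠ b) (ha : y ∈ P a)
    (hb : y ∈ P b) : IsCrossing P y := by
  rw [IsCrossing, Multiset.count_sum']
  calc 2 ≤ (P a).count y + (P b).count y :=
        Nat.add_le_add (List.count_pos_iff.mpr ha) (List.count_pos_iff.mpr hb)
    _ = ∑ k ∈ {a, b}, (P k : Multiset V).count y := by
        rw [Finset.sum_pair hab, Multiset.coe_count, Multiset.coe_count]
    _ ≤ _ := Finset.sum_le_sum_of_subset (Finset.subset_univ _)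

theorem exists_ne_mem_of_isCrossing {y : V} (hnd : (P i).Nodup) (hy : IsCrossing P y) :
    ∃ k, k ≠ i ∧ y ∈ P k := by
  by_contra! h
  have hsum : (∑ k, (P k : Multiset V)).count y = (P i).count y := by
    rw [Multiset.count_sum', Finset.sum_eq_single i (fun k _ hk => ?_) (by simp)]
    · exact Multiset.coe_count _ _
    · exact Multiset.count_eq_zero.mpr (h k hk)
  have := List.nodup_iff_count_le_one.mp hnd y
  rw [IsCrossing, hsum] at hy
  omega

end Exchange

section Pivot

variable {V ι : Type*} [DecidableEq V] [Fintype ι] [LinearOrder ι]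

structure IsPivot (P : ι → List V) (i : ι) (x : V) (j : ι) : Prop where
  isCrossing : IsCrossing P x
  split : ∃ A B, P i = A ++ x :: B ∧ ∀ y ∈ B, ¬IsCrossing P y
  min_crossing : ∀ k < i, ∀ y ∈ P k, ¬IsCrossing P y
  ne : i ≠ j
  mem : x ∈ P j
  min_mem : ∀ k < j, k ≠ i → x ∉ P k

variable {P : ι → List V} {i j i' j' : ι} {x x' : V}

theorem IsPivot.mem_left (h : IsPivot P i x j) : x ∈ P i := by
  obtain ⟨A, B, hA, -⟩ := h.split
  simp [hA]

theorem IsPivot.lt (h : IsPivot P i x j) : i < j :=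
  h.ne.lt_or_gt.resolve_right fun hji => h.min_crossing j hji x h.mem h.isCrossing

theorem IsPivot.reverse_find? (h : IsPivot P i x j) :
    (P i).reverse.find? (fun y => decide (IsCrossing P y)) = some x := by
  obtain ⟨A, B, hA, hB⟩ := h.split
  exact List.find?_reverse_eq_some_iff.mpr
    ⟨by simpa using h.isCrossing, A, B, hA, by simpa using hB⟩

theorem IsPivot.unique (h : IsPivot P i x j) (h' : IsPivot P i' x' j') :
    i = i' ∧ x = x' ∧ j = j' := by
  have hi : i = i' := le_antisymm
    (not_lt.mp fun hlt => h.min_crossing i' hlt x' h'.mem_left h'.isCrossing)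
    (not_lt.mp fun hlt => h'.min_crossing i hlt x h.mem_left h.isCrossing)
  subst hi
  have hx : x = x' := Option.some.inj (h.reverse_find?.symm.trans h'.reverse_find?)
  subst hx
  exact ⟨rfl, rfl, le_antisymm
    (not_lt.mp fun hlt => h.min_mem j' hlt h'.ne.symm h'.mem)
    (not_lt.mp fun hlt => h'.min_mem j hlt h.ne.symm h.mem)⟩

theorem exists_isPivot (hnd : ∀ k, (P k).Nodup) (hP : ¬NonIntersecting P) :
    ∃ i x j, IsPivot P i x j := by
  simp only [NonIntersecting, not_forall, not_not] at hP
  obtain ⟨a, b, hab, y, ha, hb⟩ := hP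
  obtain ⟨i, hi⟩ := exists_minimal_of_wellFoundedLT (fun k => ∃ y ∈ P k, IsCrossing P y)
    ⟨a, y, ha, isCrossing_of_mem_of_mem hab ha hb⟩
  rw [minimal_iff_forall_lt] at hi
  have hsome : ((P i).reverse.find? fun y => decide (IsCrossing P y)).isSome :=
    List.find?_isSome.mpr (by simpa using hi.1)
  obtain ⟨x, hx⟩ := Option.isSome_iff_exists.mp hsome
  obtain ⟨hxc, A, B, hA, hB⟩ := List.find?_reverse_eq_some_iff.mp hx
  obtain ⟨j, hj⟩ := exists_minimal_of_wellFoundedLT (fun k => k ≠ i ∧ x ∈ P k)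
    (exists_ne_mem_of_isCrossing (hnd i) (by simpa using hxc))
  rw [minimal_iff_forall_lt] at hj
  refine ⟨i, x, j, by simpa using hxc, ⟨A, B, hA, by simpa using hB⟩,
    fun k hk y hy hyc => hi.2 hk ⟨y, hy, hyc⟩, hj.1.1.symm, hj.1.2,
    fun k hk hki hxk => hj.2 hk ⟨hki, hxk⟩⟩

theorem isPivot_exchange (h : IsPivot P i x j) (hnd : (P i).Nodup) :
    IsPivot (exchange P i j x) i x j := by
  obtain ⟨A, B, hA, hB⟩ := h.split
  have hxA : x ∉ A := by
    rw [hA, List.nodup_middle, List.nodup_cons, List.mem_append, not_or] at hnd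
    exact hnd.1.1
  obtain ⟨D, C, hC, hxD⟩ := List.eq_append_cons_of_mem h.mem
  have hij := h.lt
  rw [← isCrossing_exchange (i := i) (j := j) (x := x)] at hB
  refine ⟨?_, ⟨D, B, ?_, hB⟩, fun k hk => ?_, h.ne, ?_, fun k hk hki => ?_⟩
  · rw [isCrossing_exchange]; exact h.isCrossing
  · rw [exchange_left, hA, hC, List.graft_append_cons hxA hxD]
  · rw [isCrossing_exchange, exchange_of_ne hk.ne (hk.trans hij).ne]
    exact h.min_crossing k hk
  · rw [exchange_right]; exact List.mem_graft_self h.mem _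
  · rw [exchange_of_ne hki hk.ne]; exact h.min_mem k hk hki

open Classical in
noncomputable def switch (P : ι → List V) : Equiv.Perm ι × (ι → List V) :=
  if h : ∃ t : ι × V × ι, IsPivot P t.1 t.2.1 t.2.2 then
    (Equiv.swap h.choose.1 h.choose.2.2, exchange P h.choose.1 h.choose.2.2 h.choose.2.1)
  else (1, P)

theorem IsPivot.switch_eq (h : IsPivot P i x j) :
    switch P = (Equiv.swap i j, exchange P i j x) := by
  have hex : ∃ t : ι × V × ι, IsPivot P t.1 t.2.1 t.2.2 := ⟨(i, x, j), h⟩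
  obtain ⟨hi, hx, hj⟩ := hex.choose_spec.unique h
  rw [switch, dif_pos hex, hi, hx, hj]

end Pivot

section Paths

variable {V R : Type*} [CommRing R] (w : V → V → R)

def IsWalk (s t : V) (l : List V) : Prop :=
  l.head? = some s ∧ l.getLast? = some t ∧ l.IsChain (fun a b => w a b ≠ 0)

variable {w}

theorem pathWeight_append_cons (x : V) (B : List V) : ∀ A : List V,
    pathWeight w (A ++ x :: B) = pathWeight w (A ++ [x]) * pathWeight w (x :: B)
  | [] => by simp [pathWeight]
  | [a] => by simp [pathWeight]
  | a :: b :: A => by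
    have ih := pathWeight_append_cons x B (b :: A)
    simp only [List.cons_append] at ih ⊢
    rw [pathWeight, ih, pathWeight, mul_assoc]

theorem isChain_of_pathWeight_ne_zero {l : List V} (h : pathWeight w l ≠ 0) :
    l.IsChain (fun a b => w a b ≠ 0) := by
  induction l using pathWeight.induct with
  | case1 => exact List.isChain_nil
  | case2 a => exact List.isChain_singleton a
  | case3 a b t ih =>
    rw [pathWeight] at h
    exact List.isChain_cons_cons.mpr ⟨left_ne_zero_of_mul h, ih (right_ne_zero_of_mul h)⟩

theorem nodup_of_isChain {β : Type*} [Preorder β] {rank : V → β}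
    (hacyc : ∀ a b, w a b ≠ 0 → rank a < rank b) {l : List V}
    (h : l.IsChain (fun a b => w a b ≠ 0)) : l.Nodup :=
  (List.pairwise_map.mp ((List.isChain_map rank).mpr (h.imp hacyc)).pairwise).imp
    fun hab => ne_of_apply_ne rank hab.ne

variable [DecidableEq V] {s t s' t' x : V}

theorem IsWalk.graft {l l' : List V} (hl : IsWalk w s t l) (hl' : IsWalk w s' t' l')
    (hx : x ∈ l) (hx' : x ∈ l') : IsWalk w s' t (l.graft x l') := by
  obtain ⟨A, B, rfl, hA⟩ := List.eq_append_cons_of_mem hx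
  obtain ⟨D, C, rfl, hD⟩ := List.eq_append_cons_of_mem hx'
  obtain ⟨-, hlast, hchain⟩ := hl
  obtain ⟨hhead, -, hchain'⟩ := hl'
  rw [List.graft_append_cons hA hD]
  refine ⟨by simpa using hhead, by simpa using hlast, ?_⟩
  rw [List.append_cons] at hchain'
  simpa using hchain'.left_of_append.append_overlap (l₃ := B) hchain.right_of_append
    (List.cons_ne_nil x [])

theorem pathWeight_graft_mul {l l' : List V} (hx : x ∈ l) (hx' : x ∈ l') :
    pathWeight w (l.graft x l') * pathWeight w (l'.graft x l) =
      pathWeight w l * pathWeight w l' := by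
  obtain ⟨A, B, rfl, hA⟩ := List.eq_append_cons_of_mem hx
  obtain ⟨D, C, rfl, hD⟩ := List.eq_append_cons_of_mem hx'
  rw [List.graft_append_cons hA hD, List.graft_append_cons hD hA, pathWeight_append_cons x B D,
    pathWeight_append_cons x C A, pathWeight_append_cons x B A, pathWeight_append_cons x C D]
  ring

end Paths

section Families

variable {V R : Type*} [CommRing R] {w : V → V → R}

theorem isWalk_exchange {ι : Type*} [DecidableEq ι] [DecidableEq V] {s t : ι → V}
    {P : ι → List V} {i j : ι} {x : V} (hP : ∀ k, IsWalk w (s k) (t k) (P k)) (hi : x ∈ P i)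
    (hj : x ∈ P j) (k : ι) : IsWalk w (s (Equiv.swap i j k)) (t k) (exchange P i j x k) := by
  by_cases hki : k = i
  · subst hki
    rw [exchange_left, Equiv.swap_apply_left]
    exact (hP k).graft (hP j) hi hj
  by_cases hkj : k = j
  · subst hkj
    rw [exchange_right, Equiv.swap_apply_right]
    exact (hP k).graft (hP i) hj hi
  rw [exchange_of_ne hki hkj, Equiv.swap_apply_of_ne_of_ne hki hkj]
  exact hP k

variable [Fintype V]

variable (w) in
/-- `Nodup` makes this finite outright; under acyclicity it is automatic (`mem_paths`). -/
noncomputable def paths (s t : V) : Finset (List V) :=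
  Set.Finite.toFinset (s := {l | l.Nodup ∧ IsWalk w s t l})
    ((List.finite_length_le V (Fintype.card V)).subset fun _ hl => hl.1.length_le_card)

variable {β : Type*} [Preorder β] {rank : V → β}

theorem mem_paths (hacyc : ∀ a b, w a b ≠ 0 → rank a < rank b) {s t : V} {l : List V} :
    l ∈ paths w s t ↔ IsWalk w s t l := by
  rw [paths, Set.Finite.mem_toFinset, Set.mem_ofPred_eq, and_iff_right_iff_imp]
  exact fun h => nodup_of_isChain hacyc h.2.2

theorem pathGF_eq_sum_paths (hacyc : ∀ a b, w a b ≠ 0 → rank a < rank b) (s t : V) :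
    pathGF w s t = ∑ l ∈ paths w s t, pathWeight w l := by
  refine finsum_mem_eq_sum_of_inter_support_eq _ (Set.ext fun l => ?_)
  simp only [Set.mem_inter_iff, Set.mem_ofPred_eq, Function.mem_support, Finset.mem_coe,
    mem_paths hacyc, IsWalk]
  exact ⟨fun ⟨⟨hs, ht⟩, hw⟩ => ⟨⟨hs, ht, isChain_of_pathWeight_ne_zero hw⟩, hw⟩,
    fun ⟨⟨hs, ht, _⟩, hw⟩ => ⟨⟨hs, ht⟩, hw⟩⟩

variable {ι : Type*} [Fintype ι] [DecidableEq ι]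

theorem prod_pathGF_eq_sum (hacyc : ∀ a b, w a b ≠ 0 → rank a < rank b) (s t : ι → V) :
    ∏ k, pathGF w (s k) (t k) =
      ∑ P ∈ Fintype.piFinset fun k => paths w (s k) (t k), ∏ k, pathWeight w (P k) := by
  simp_rw [pathGF_eq_sum_paths hacyc]
  exact prod_univ_sum _ _

variable [DecidableEq V]

theorem finsum_nonIntersecting_eq_sum (hacyc : ∀ a b, w a b ≠ 0 → rank a < rank b)
    (s t : ι → V) :
    ∑ᶠ P ∈ {P : ι → List V |
        (∀ k, (P k).head? = some (s k) ∧ (P k).getLast? = some (t k)) ∧ NonIntersecting P},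
      ∏ k, pathWeight w (P k) =
    ∑ P ∈ (Fintype.piFinset fun k => paths w (s k) (t k)).filter NonIntersecting,
      ∏ k, pathWeight w (P k) := by
  refine finsum_mem_eq_sum_of_inter_support_eq _ (Set.ext fun P => ?_)
  simp only [Set.mem_inter_iff, Set.mem_ofPred_eq, Function.mem_support, Finset.coe_filter,
    Fintype.mem_piFinset, mem_paths hacyc, IsWalk]
  refine ⟨fun ⟨⟨hst, hP⟩, hw⟩ => ⟨⟨fun k => ⟨(hst k).1, (hst k).2, ?_⟩, hP⟩, hw⟩,
    fun ⟨⟨hst, hP⟩, hw⟩ => ⟨⟨fun k => ⟨(hst k).1, (hst k).2.1⟩, hP⟩, hw⟩⟩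
  exact isChain_of_pathWeight_ne_zero fun h0 => hw (prod_eq_zero (mem_univ k) h0)

theorem sum_sign_mul_sum_intersecting_eq_zero {ι : Type*} [Fintype ι] [LinearOrder ι]
    (hacyc : ∀ a b, w a b ≠ 0 → rank a < rank b) (u v : ι → V) :
    ∑ σ : Equiv.Perm ι, ((Equiv.Perm.sign σ : ℤ) : R) *
      ∑ P ∈ (Fintype.piFinset fun k => paths w (u (σ k)) (v k)).filter (¬NonIntersecting ·),
        ∏ k, pathWeight w (P k) = 0 := by
  have hpivot : ∀ σ : Equiv.Perm ι,
      ∀ P ∈ (Fintype.piFinset fun k => paths w (u (σ k)) (v k)).filter (¬NonIntersecting ·),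
      (∀ k, IsWalk w (u (σ k)) (v k) (P k)) ∧ ∃ i x j, IsPivot P i x j ∧
        IsPivot (exchange P i j x) i x j := by
    intro σ P hP
    simp only [mem_filter, Fintype.mem_piFinset, mem_paths hacyc] at hP
    have hnd k := nodup_of_isChain hacyc (hP.1 k).2.2
    obtain ⟨i, x, j, h⟩ := exists_isPivot hnd hP.2
    exact ⟨hP.1, i, x, j, h, isPivot_exchange h (hnd i)⟩
  refine sum_sign_mul_sum_eq_zero_of_involution _ _ (fun P => (switch P).1)
    (fun P => (switch P).2) ?_ ?_ ?_ ?_ ?_ <;> intro σ P hP <;>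
    obtain ⟨hwalk, i, x, j, h, h'⟩ := hpivot σ P hP <;> simp only [h.switch_eq, h'.switch_eq]
  · exact ⟨i, j, h.ne, rfl⟩
  · simp only [mem_filter, Fintype.mem_piFinset, mem_paths hacyc]
    exact ⟨isWalk_exchange hwalk h.mem_left h.mem, fun hni => hni i j h.ne x h'.mem_left h'.mem⟩
  · exact exchange_exchange h.mem_left h.mem
  · exact prod_exchange _ (pathWeight_graft_mul h.mem_left h.mem)

end Families

end LGV

/-- Lindström–Gessel–Viennot: for a finite acyclic weighted directed graph (acyclicity
witnessed by a rank function which strictly increases along edges of nonzero weight),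
the signed generating function of nonintersecting path families from `u_{σ(k)}` to `v_k`
equals the determinant of the path matrix. -/
theorem lindstrom_gessel_viennot {V : Type*} [Fintype V] [DecidableEq V]
    {R : Type*} [CommRing R] {m : ℕ}
    (w : V → V → R) (rank : V → ℕ)
    (hacyc : ∀ a b : V, w a b ≠ 0 → rank a < rank b)
    (u v : Fin m → V) :
    ∑ σ : Equiv.Perm (Fin m), ((Equiv.Perm.sign σ : ℤ) : R) *
      ∑ᶠ P ∈ {P : Fin m → List V |
          (∀ k, (P k).head? = some (u (σ k)) ∧ (P k).getLast? = some (v k)) ∧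
          (∀ i j, i ≠ j → ∀ x ∈ P i, x ∉ P j)},
        ∏ k, pathWeight w (P k)
      = Matrix.det (Matrix.of fun i j => pathGF w (u i) (v j)) := by
  rw [Matrix.det_apply, ← add_zero (∑ σ : Equiv.Perm (Fin m), _),
    ← LGV.sum_sign_mul_sum_intersecting_eq_zero hacyc u v, ← sum_add_distrib]
  refine sum_congr rfl fun σ _ => ?_
  rw [Units.smul_def, zsmul_eq_mul, ← mul_add]
  refine congrArg _ ((congrArg (· + _) (LGV.finsum_nonIntersecting_eq_sum hacyc _ v)).trans ?_)
  rw [sum_filter_add_sum_filter_not, ← LGV.prod_pathGF_eq_sum hacyc]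
  rfl
end
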